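/- There is an absolute constant C > 0 such that for all real M ≥ 1, all real U, T with 0 ≤ U ≤ T ≤ √M, all real Ξ with 0 ≤ Ξ ≤ M, all positive integers m, n, k with m < n, and either choice of sign ±, one has |∫_M^{M+Ξ} x^{1/2}·e(±(2√(m(x+T))/k − 2√(n(x+U))/k)) dx| ≤ C·k·√n·M/(n − m). -/

import Mathlib

open Complex MeasureTheory

/-- `e(t) = exp(2πit)`. -/
noncomputable def e (t : ℝ) : ℂ := Complex.exp (2 * Real.pi * Complex.I * t)

/-!
First derivative test. With `β = √n / k` and `α = √m / k` the phase is `∓ φ`, where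
`φ x = 2β √(x + U) - 2α √(x + T)` has the positive, decreasing derivative
`φ' x = β / √(x + U) - α / √(x + T)` (decreasing because `α ≤ β` and `U ≤ T`). Integrating by parts
against `e (φ x) / (2πi)` with the increasing weight `G = √x / φ'`, each boundary term and the
total variation of `G` contribute at most `G b / (2π)`, so the integral is at most `√b / (π φ' b)`.
Finally `φ' b ≥ (β - α) / √(b + T) ≥ (n - m) / (2 k √n √(b + T))` and `√b √(b + T) ≤ 3M`.
-/

open Set intervalIntegral Real

lemma norm_e (t : ℝ) : ‖e t‖ = 1 := by
  simpa [e, mul_comm, mul_left_comm, mul_assoc] using Complex.norm_exp_ofReal_mul_I (2 * π * t)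

lemma HasDerivAt.e_comp {φ : ℝ → ℝ} {φ' x : ℝ} (h : HasDerivAt φ φ' x) :
    HasDerivAt (fun y => e (φ y)) (2 * π * I * φ' * e (φ x)) x := by
  have := (h.ofReal_comp.const_mul (2 * π * I : ℂ)).cexp
  simpa [e, mul_comm, mul_left_comm, mul_assoc] using this

theorem norm_integral_mul_deriv_mul_e_le {a b : ℝ} {G φ φ' : ℝ → ℝ} (hab : a ≤ b)
    (hG : MonotoneOn G (Icc a b)) (hGa : 0 ≤ G a) (hGd : DifferentiableOn ℝ G (Icc a b))
    (hφ : ∀ x ∈ Icc a b, HasDerivAt φ (φ' x) x) (hφ' : ContinuousOn φ' (Icc a b)) :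
    ‖∫ x in a..b, ((G x * φ' x : ℝ) : ℂ) * e (φ x)‖ ≤ G b / π := by
  -- the derivative within `Icc a b` is nonnegative everywhere, endpoints included
  set G' := derivWithin G (Icc a b)
  set v := fun y => e (φ y) / (2 * π * I)
  have hG' : ∀ x ∈ Ioo a b, HasDerivAt G (G' x) x := fun x hx =>
    (hGd x (Ioo_subset_Icc_self hx)).hasDerivWithinAt.hasDerivAt (Icc_mem_nhds hx.1 hx.2)
  have hG'_nonneg : ∀ x, 0 ≤ G' x := fun x => hG.derivWithin_nonneg
  have hG'_int : IntervalIntegrable G' volume a b :=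
    intervalIntegrable_deriv_of_nonneg (uIcc_of_le hab ▸ hGd.continuousOn)
      (by simpa [hab] using hG') fun x _ => hG'_nonneg x
  have hv : ∀ x ∈ Icc a b, HasDerivAt v ((φ' x : ℂ) * e (φ x)) x := fun x hx => by
    have h2πI : (2 * π * I : ℂ) ≠ 0 := by simp [pi_ne_zero, I_ne_zero]
    refine ((hφ x hx).e_comp.div_const (2 * π * I)).congr_deriv ?_
    rw [div_eq_iff h2πI]; ring
  have hnorm_v : ∀ x, ‖v x‖ = 1 / (2 * π) := fun x => by
    simp [v, norm_e, pi_pos.le]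
  have hv'_cont : ContinuousOn (fun x => (φ' x : ℂ) * e (φ x)) (Icc a b) :=
    (continuous_ofReal.comp_continuousOn hφ').mul fun x hx =>
      (hφ x hx).e_comp.continuousAt.continuousWithinAt
  have hparts := integral_smul_deriv_eq_deriv_smul_of_hasDerivAt
    (uIcc_of_le hab ▸ hGd.continuousOn)
    (fun x hx => (hv x (uIcc_of_le hab ▸ hx)).continuousAt.continuousWithinAt)
    (by simpa [hab] using hG') (fun x hx => hv x (Ioo_subset_Icc_self (by simpa [hab] using hx)))
    hG'_int (hv'_cont.intervalIntegrable_of_Icc hab)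
  have hrem : ‖∫ x in a..b, G' x • v x‖ ≤ (G b - G a) / (2 * π) := calc
    _ ≤ ∫ x in a..b, G' x / (2 * π) := norm_integral_le_of_norm_le hab
          (ae_of_all _ fun x _ => by
            rw [norm_smul, hnorm_v, Real.norm_of_nonneg (hG'_nonneg x), mul_one_div])
          (hG'_int.div_const _)
    _ = (G b - G a) / (2 * π) := by
      rw [intervalIntegral.integral_div,
        integral_eq_sub_of_hasDerivAt_of_le hab hGd.continuousOn hG' hG'_int]
  have hGb : 0 ≤ G b := hGa.trans (hG (left_mem_Icc.2 hab) (right_mem_Icc.2 hab) hab)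
  calc ‖∫ x in a..b, ((G x * φ' x : ℝ) : ℂ) * e (φ x)‖
      = ‖G b • v b - G a • v a - ∫ x in a..b, G' x • v x‖ := by
        rw [← hparts]; congr 2; ext x; simp [Complex.real_smul, mul_assoc]
    _ ≤ G b / (2 * π) + G a / (2 * π) + (G b - G a) / (2 * π) := by
        refine (norm_sub_le _ _).trans (add_le_add ((norm_sub_le _ _).trans (le_of_eq ?_)) hrem)
        rw [norm_smul, norm_smul, hnorm_v, hnorm_v, Real.norm_of_nonneg hGa,
          Real.norm_of_nonneg hGb, mul_one_div, mul_one_div]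
    _ = G b / π := by field_simp; ring

theorem norm_integral_mul_e_le_of_antitoneOn_deriv {a b s : ℝ} {A φ φ' : ℝ → ℝ} (hab : a ≤ b)
    (hA : MonotoneOn A (Icc a b)) (hAa : 0 ≤ A a) (hAd : DifferentiableOn ℝ A (Icc a b))
    (hφ : ∀ x ∈ Icc a b, HasDerivAt φ (φ' x) x) (hφ' : AntitoneOn φ' (Icc a b))
    (hφ'b : 0 < φ' b) (hφ'd : DifferentiableOn ℝ φ' (Icc a b)) (hs : s = 1 ∨ s = -1) :
    ‖∫ x in a..b, (A x : ℂ) * e (s * φ x)‖ ≤ A b / (π * φ' b) := by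
  have hφ'_pos : ∀ x ∈ Icc a b, 0 < φ' x := fun x hx =>
    hφ'b.trans_le (hφ' hx (right_mem_Icc.2 hab) hx.2)
  have hG : MonotoneOn (fun x => A x / φ' x) (Icc a b) := fun x hx y hy hxy =>
    div_le_div₀ (hAa.trans (hA (left_mem_Icc.2 hab) hy hy.1)) (hA hx hy hxy) (hφ'_pos y hy)
      (hφ' hx hy hxy)
  have hbound := norm_integral_mul_deriv_mul_e_le hab hG
    (div_nonneg hAa (hφ'_pos a (left_mem_Icc.2 hab)).le)
    (hAd.div hφ'd fun x hx => (hφ'_pos x hx).ne') (fun x hx => (hφ x hx).const_mul s)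
    (continuousOn_const.mul hφ'd.continuousOn)
  have hs_sq : s * s = 1 := by rcases hs with rfl | rfl <;> norm_num
  have hs_norm : ‖(s : ℂ)‖ = 1 := by rcases hs with rfl | rfl <;> simp
  calc ‖∫ x in a..b, (A x : ℂ) * e (s * φ x)‖
      = ‖(s : ℂ) * ∫ x in a..b, ((A x / φ' x * (s * φ' x) : ℝ) : ℂ) * e (s * φ x)‖ := by
        rw [← intervalIntegral.integral_const_mul]
        refine congrArg _ (integral_congr fun x hx => ?_)
        have hA_eq : A x / φ' x * (s * φ' x) = s * A x := by
          field_simp [(hφ'_pos x (uIcc_of_le hab ▸ hx)).ne']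
        have hs_sq' : (s : ℂ) * s = 1 := by exact_mod_cast hs_sq
        simp only [hA_eq, ofReal_mul]
        linear_combination (-(A x : ℂ) * e (s * φ x)) * hs_sq'
    _ ≤ A b / φ' b / π := by rw [norm_mul, hs_norm, one_mul]; exact hbound
    _ = A b / (π * φ' b) := by rw [div_div, mul_comm]

lemma hasDerivAt_two_mul_mul_sqrt_add (β : ℝ) {c x : ℝ} (hx : 0 < x + c) :
    HasDerivAt (fun y => 2 * β * √(y + c)) (β / √(x + c)) x := by
  have := ((hasDerivAt_sqrt hx.ne').comp x ((hasDerivAt_id x).add_const c)).const_mul (2 * β)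
  refine this.congr_deriv ?_
  field_simp [(sqrt_pos.2 hx).ne']

lemma hasDerivAt_const_div_sqrt_add (β : ℝ) {c x : ℝ} (hx : 0 < x + c) :
    HasDerivAt (fun y => β / √(y + c)) (-(β / (2 * (x + c) * √(x + c)))) x := by
  have := (hasDerivAt_const x β).div
    ((hasDerivAt_sqrt hx.ne').comp x ((hasDerivAt_id x).add_const c)) (sqrt_pos.2 hx).ne'
  refine this.congr_deriv ?_
  simp only [Function.comp_apply, id]
  rw [sq_sqrt hx.le]
  field_simp [(sqrt_pos.2 hx).ne']
  ring

section
variable {α β U T : ℝ}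

lemma antitoneOn_div_sqrt_add_sub_div_sqrt_add (hα : 0 ≤ α) (hαβ : α ≤ β) (hUT : U ≤ T) :
    AntitoneOn (fun x => β / √(x + U) - α / √(x + T)) (Ioi (-U)) := by
  have hpos : ∀ x ∈ Ioi (-U), 0 < x + U ∧ 0 < x + T := fun x hx => by
    simp only [mem_Ioi] at hx; constructor <;> linarith
  have hderiv : ∀ x ∈ Ioi (-U), HasDerivAt (fun x => β / √(x + U) - α / √(x + T))
      (-(β / (2 * (x + U) * √(x + U))) - -(α / (2 * (x + T) * √(x + T)))) x := fun x hx =>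
    (hasDerivAt_const_div_sqrt_add β (hpos x hx).1).sub
      (hasDerivAt_const_div_sqrt_add α (hpos x hx).2)
  refine antitoneOn_of_hasDerivWithinAt_nonpos (convex_Ioi _) (HasDerivAt.continuousOn hderiv)
    (fun x hx => (hderiv x (interior_subset hx)).hasDerivWithinAt) fun x hx => ?_
  rw [interior_Ioi] at hx
  obtain ⟨hxU, hxT⟩ := hpos x hx
  have : α / (2 * (x + T) * √(x + T)) ≤ β / (2 * (x + U) * √(x + U)) :=
    div_le_div₀ (hα.trans hαβ) hαβ (by positivity) (by gcongr)
  linarith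

lemma sub_div_sqrt_le_div_sqrt_sub_div_sqrt {x : ℝ} (hβ : 0 ≤ β) (hU : 0 < x + U) (hUT : U ≤ T) :
    (β - α) / √(x + T) ≤ β / √(x + U) - α / √(x + T) := by
  rw [sub_div]
  gcongr

end

lemma sub_div_two_sqrt_le_sqrt_sub_sqrt {x y : ℝ} (hx : 0 < x) (hy : 0 ≤ y) :
    (x - y) / (2 * √x) ≤ √x - √y := by
  rw [div_le_iff₀ (by positivity)]
  nlinarith [sq_sqrt hx.le, sq_sqrt hy, sq_nonneg (√x - √y)]

lemma sqrt_mul_sqrt_add_le {M Ξ T : ℝ} (hM : 1 ≤ M) (hT : 0 ≤ T) (hTM : T ≤ √M) (hΞ : 0 ≤ Ξ)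
    (hΞM : Ξ ≤ M) : √(M + Ξ) * √(M + Ξ + T) ≤ 3 * M := by
  have hT_le : T ≤ M := hTM.trans (sqrt_le_left (by linarith) |>.2 (by nlinarith))
  rw [← sqrt_mul (by linarith), sqrt_le_left (by linarith)]
  nlinarith

theorem norm_integral_sqrt_mul_e_le {a b U T α β s : ℝ} (hab : a ≤ b) (ha : 0 < a) (hU : 0 ≤ U)
    (hUT : U ≤ T) (hα : 0 ≤ α) (hαβ : α < β) (hs : s = 1 ∨ s = -1) :
    ‖∫ x in a..b, (√x : ℂ) * e (s * (2 * β * √(x + U) - 2 * α * √(x + T)))‖ ≤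
      √b / (π * (β / √(b + U) - α / √(b + T))) := by
  have hpos : ∀ x ∈ Icc a b, 0 < x ∧ 0 < x + U ∧ 0 < x + T := fun x hx => by
    refine ⟨?_, ?_, ?_⟩ <;> linarith [hx.1]
  refine norm_integral_mul_e_le_of_antitoneOn_deriv hab (fun x _ y _ hxy => sqrt_le_sqrt hxy)
    (sqrt_nonneg _)
    (fun x hx => (hasDerivAt_sqrt (hpos x hx).1.ne').differentiableAt.differentiableWithinAt)
    (fun x hx => (hasDerivAt_two_mul_mul_sqrt_add β (hpos x hx).2.1).sub
      (hasDerivAt_two_mul_mul_sqrt_add α (hpos x hx).2.2))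
    ((antitoneOn_div_sqrt_add_sub_div_sqrt_add hα hαβ.le hUT).mono
      fun x hx => by simp only [mem_Ioi]; linarith [(hpos x hx).2.1])
    ?_ (fun x hx => ((hasDerivAt_const_div_sqrt_add β (hpos x hx).2.1).sub
      (hasDerivAt_const_div_sqrt_add α (hpos x hx).2.2)).differentiableAt.differentiableWithinAt)
    hs
  have hb := hpos b (right_mem_Icc.2 hab)
  exact (div_pos (sub_pos.2 hαβ) (sqrt_pos.2 hb.2.2)).trans_le
    (sub_div_sqrt_le_div_sqrt_sub_div_sqrt (hα.trans hαβ.le) hb.2.1 hUT)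

lemma sqrt_div_pi_mul_le {M U T Ξ m n k : ℝ} (hM : 1 ≤ M) (hU : 0 ≤ U) (hUT : U ≤ T)
    (hTM : T ≤ √M) (hΞ : 0 ≤ Ξ) (hΞM : Ξ ≤ M) (hm : 0 ≤ m) (hmn : m < n) (hk : 0 < k) :
    √(M + Ξ) / (π * (√n / k / √(M + Ξ + U) - √m / k / √(M + Ξ + T))) ≤
      2 * k * √n * M / (n - m) := by
  have hn : 0 < n := hm.trans_lt hmn
  have hsqrt_n : 0 < √n := sqrt_pos.2 hn
  have hnm : 0 < n - m := sub_pos.2 hmn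
  have hsqrt_bT : 0 < √(M + Ξ + T) := sqrt_pos.2 (by linarith)
  have hL : (n - m) / (2 * √n) / k / √(M + Ξ + T) ≤
      √n / k / √(M + Ξ + U) - √m / k / √(M + Ξ + T) := calc
    _ ≤ (√n - √m) / k / √(M + Ξ + T) := by
        gcongr; exact sub_div_two_sqrt_le_sqrt_sub_sqrt hn hm
    _ = (√n / k - √m / k) / √(M + Ξ + T) := by rw [sub_div]
    _ ≤ _ := sub_div_sqrt_le_div_sqrt_sub_div_sqrt (by positivity) (by linarith) hUT
  have hL_pos : 0 < (n - m) / (2 * √n) / k / √(M + Ξ + T) := by positivity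
  calc _ ≤ √(M + Ξ) / (π * ((n - m) / (2 * √n) / k / √(M + Ξ + T))) := by gcongr
    _ = 2 * k * √n * (√(M + Ξ) * √(M + Ξ + T)) / (π * (n - m)) := by field_simp
    _ ≤ 2 * k * √n * (3 * M) / (3 * (n - m)) := by
        refine div_le_div₀ (by positivity) ?_ (by positivity) ?_
        · exact mul_le_mul_of_nonneg_left (sqrt_mul_sqrt_add_le hM (hU.trans hUT) hTM hΞ hΞM)
            (by positivity)
        · gcongr; exact pi_gt_three.le
    _ = 2 * k * √n * M / (n - m) := by field_simp

theorem mean_square_lemma_two :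
    ∃ C : ℝ, 0 < C ∧ ∀ M U T Ξ : ℝ, 1 ≤ M → 0 ≤ U → U ≤ T → T ≤ Real.sqrt M →
      0 ≤ Ξ → Ξ ≤ M → ∀ m n k : ℕ, 0 < m → 0 < n → 0 < k → m < n →
      ∀ s : ℝ, s = 1 ∨ s = -1 →
        ‖∫ x in M..(M + Ξ), ((x ^ ((1:ℝ)/2) : ℝ) : ℂ) *
            e (s * (2 * Real.sqrt (m * (x + T)) / k - 2 * Real.sqrt (n * (x + U)) / k))‖ ≤
          C * k * Real.sqrt n * M / ((n : ℝ) - (m : ℝ)) := by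
  refine ⟨2, two_pos, fun M U T Ξ hM hU hUT hTM hΞ hΞM m n k _ _ hk hmn s hs => ?_⟩
  have hk' : (0 : ℝ) < k := by exact_mod_cast hk
  have hmn' : (m : ℝ) < n := by exact_mod_cast hmn
  have hintegrand : ∀ x : ℝ, ((x ^ ((1:ℝ)/2) : ℝ) : ℂ) *
      e (s * (2 * √(m * (x + T)) / k - 2 * √(n * (x + U)) / k)) =
      (√x : ℂ) * e (-s * (2 * (√n / k) * √(x + U) - 2 * (√m / k) * √(x + T))) := fun x => by
    rw [← sqrt_eq_rpow, sqrt_mul (Nat.cast_nonneg m), sqrt_mul (Nat.cast_nonneg n)]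
    ring_nf
  simp only [hintegrand]
  refine (norm_integral_sqrt_mul_e_le (by linarith) (by linarith) hU hUT (by positivity)
    (by gcongr) (by rcases hs with rfl | rfl <;> norm_num)).trans ?_
  exact sqrt_div_pi_mul_le hM hU hUT hTM hΞ hΞM (Nat.cast_nonneg m) hmn' hk'
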